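/- arXiv:1212.5518 — 3 statements merged into one kernel-verified Lean document; each statement's English description precedes it below -/
import Mathlib

section
/- Let λ₁, …, λ_n be positive, pairwise distinct real numbers and let f_i(t) = λ_i e^{−λ_i t} for t ≥ 0 (and 0 for t < 0). Then the n-fold convolution f₁ * f₂ * ⋯ * f_n evaluated at t ≥ 0 equals Σ_{l=1}^{n} [ (∏_{k=1}^{n} λ_k) / (∏_{k=1, k≠l}^{n} (λ_k − λ_l)) ] · e^{−λ_l t}. -/
open MeasureTheory

noncomputable def expDens (l : ℝ) (t : ℝ) : ℝ :=
  if 0 ≤ t then l * Real.exp (-l * t) else 0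

noncomputable def convPair (f g : ℝ → ℝ) (t : ℝ) : ℝ :=
  ∫ s in (0 : ℝ)..t, f s * g (t - s)

noncomputable def convExp : List ℝ → ℝ → ℝ
  | [] => fun _ => 0
  | [l] => expDens l
  | l :: ls => convPair (expDens l) (convExp ls)

/-! Induct on `n`, peeling off the first rate `a = λ₁`. Convolving `a e^{-a s}` with `e^{-μ s}`
gives `a / (μ - a) · (e^{-a t} - e^{-μ t})`, so every old exponential keeps its coefficient up to
the factor `a / (a - μ_j)`, and a new term `e^{-a t}` appears whose coefficient is
`a ∏ μ · ∑_j 1 / ((μ_j - a) ∏_{k ≠ j} (μ_k - μ_j))`. The partial fraction identity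
`∑_j 1 / ((μ_j - a) ∏_{k ≠ j} (μ_k - μ_j)) = 1 / ∏_j (μ_j - a)` turns this into the claimed
coefficient; it is the barycentric form of Lagrange interpolation of the constant `1`. -/

open Finset Function

lemma convExp_cons_of_ne_nil {a : ℝ} {ls : List ℝ} (h : ls ≠ []) :
    convExp (a :: ls) = convPair (expDens a) (convExp ls) := by
  cases ls with
  | nil => exact absurd rfl h
  | cons b l => rfl

lemma integral_exp_mul_of_ne_zero {c : ℝ} (hc : c ≠ 0) (a b : ℝ) :
    ∫ s in a..b, Real.exp (c * s) = (Real.exp (c * b) - Real.exp (c * a)) / c := by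
  rw [intervalIntegral.integral_comp_mul_left (fun x => Real.exp x) hc, integral_exp,
    smul_eq_mul, inv_mul_eq_div]

lemma integral_exp_conv_exp {a b : ℝ} (hab : a ≠ b) (t : ℝ) :
    ∫ s in (0 : ℝ)..t, a * Real.exp (-a * s) * Real.exp (-b * (t - s)) =
      a / (b - a) * (Real.exp (-a * t) - Real.exp (-b * t)) := by
  have hba : b - a ≠ 0 := sub_ne_zero.2 hab.symm
  have hsplit : ∀ s, a * Real.exp (-a * s) * Real.exp (-b * (t - s)) =
      a * Real.exp (-b * t) * Real.exp ((b - a) * s) := fun s => by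
    rw [mul_assoc, mul_assoc, ← Real.exp_add, ← Real.exp_add]; ring_nf
  simp only [hsplit, intervalIntegral.integral_const_mul, integral_exp_mul_of_ne_zero hba]
  have hexp : Real.exp (-b * t) * Real.exp ((b - a) * t) = Real.exp (-a * t) := by
    rw [← Real.exp_add]; ring_nf
  rw [mul_zero, Real.exp_zero, ← hexp]
  ring

lemma convPair_expDens_eq_sum {ι : Type*} (s : Finset ι) {a t : ℝ} (ht : 0 ≤ t)
    {g : ℝ → ℝ} {c μ : ι → ℝ} (hμ : ∀ j ∈ s, μ j ≠ a)
    (hg : ∀ u ∈ Set.Icc 0 t, g u = ∑ j ∈ s, c j * Real.exp (-μ j * u)) :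
    convPair (expDens a) g t =
      ∑ j ∈ s, c j * (a / (μ j - a) * (Real.exp (-a * t) - Real.exp (-μ j * t))) := by
  have hintegrand : Set.EqOn (fun u => expDens a u * g (t - u))
      (fun u => ∑ j ∈ s, c j * (a * Real.exp (-a * u) * Real.exp (-μ j * (t - u))))
      (Set.uIcc 0 t) := by
    rintro u ⟨hu0, hut⟩
    rw [inf_eq_left.2 ht] at hu0
    rw [sup_eq_right.2 ht] at hut
    simp only [expDens, if_pos hu0, hg (t - u) ⟨by linarith, by linarith⟩, mul_sum]
    exact sum_congr rfl fun j _ => by ring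
  rw [convPair, intervalIntegral.integral_congr hintegrand,
    intervalIntegral.integral_finsetSum fun j _ =>
      (by fun_prop : Continuous _).intervalIntegrable _ _]
  exact sum_congr rfl fun j hj => by
    rw [intervalIntegral.integral_const_mul, integral_exp_conv_exp (hμ j hj).symm]

lemma Lagrange.sum_inv_prod_sub_mul_inv_sub {F ι : Type*} [Field F] [DecidableEq ι]
    {s : Finset ι} {v : ι → F} (hvs : Set.InjOn v s) (hs : s.Nonempty) {x : F}
    (hx : ∀ i ∈ s, v i ≠ x) :
    ∑ i ∈ s, (∏ k ∈ s.erase i, (v k - v i))⁻¹ * (v i - x)⁻¹ = (∏ i ∈ s, (v i - x))⁻¹ := by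
  -- interpolate the constant `1` at the nodes `-v`, which makes all signs match
  have hvs' : Set.InjOn (-v) s := fun i hi j hj h => hvs hi hj (neg_inj.1 h)
  have hx' : ∀ i ∈ s, -x ≠ (-v) i := fun i hi => by simpa [eq_comm] using hx i hi
  have key := Lagrange.eval_interpolate_not_at_node (1 : ι → F) hx'
  rw [Lagrange.interpolate_one hvs' hs, Polynomial.eval_one, Lagrange.eval_nodal] at key
  simp only [Pi.neg_apply, neg_sub_neg, Lagrange.nodalWeight, Pi.one_apply, mul_one,
    prod_inv_distrib] at key
  exact eq_inv_of_mul_eq_one_right key.symm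

lemma Fin.prod_univ_erase_zero {M : Type*} [CommMonoid M] {m : ℕ} (g : Fin (m + 1) → M) :
    ∏ k ∈ univ.erase 0, g k = ∏ j : Fin m, g j.succ := by
  rw [Fin.univ_succ, erase_cons, prod_map]
  rfl

lemma Fin.prod_univ_erase_succ {M : Type*} [CommMonoid M] {m : ℕ} (g : Fin (m + 1) → M)
    (j : Fin m) : ∏ k ∈ univ.erase j.succ, g k = g 0 * ∏ k ∈ univ.erase j, g k.succ := by
  rw [Fin.univ_succ, erase_cons_of_ne _ (Fin.succ_ne_zero j).symm, Finset.prod_cons]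
  congr 1
  exact map_erase ⟨Fin.succ, Fin.succ_injective _⟩ univ j ▸ prod_map _ _ g

noncomputable def hypoexpCoeff {n : ℕ} (lam : Fin n → ℝ) (l : Fin n) : ℝ :=
  (∏ k, lam k) / ∏ k ∈ univ.erase l, (lam k - lam l)

lemma hypoexpCoeff_succ {m : ℕ} (lam : Fin (m + 1) → ℝ) (j : Fin m) :
    hypoexpCoeff lam j.succ = -(lam 0 / (lam j.succ - lam 0)) * hypoexpCoeff (Fin.tail lam) j := by
  rw [hypoexpCoeff, hypoexpCoeff, Fin.prod_univ_succ, Fin.prod_univ_erase_succ, ← neg_sub,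
    ← div_neg, mul_div_mul_comm]
  rfl

lemma hypoexpCoeff_zero {m : ℕ} (lam : Fin (m + 2) → ℝ) (hlam : Injective lam) :
    hypoexpCoeff lam 0 = ∑ j, hypoexpCoeff (Fin.tail lam) j * (lam 0 / (lam j.succ - lam 0)) := by
  have hpf := Lagrange.sum_inv_prod_sub_mul_inv_sub (s := univ) (v := Fin.tail lam) (x := lam 0)
    (hlam.comp (Fin.succ_injective _)).injOn univ_nonempty
    fun (j : Fin (m + 1)) _ h => Fin.succ_ne_zero j (hlam h)
  rw [hypoexpCoeff, Fin.prod_univ_succ, Fin.prod_univ_erase_zero, mul_div_assoc]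
  simp only [hypoexpCoeff, Fin.tail, div_eq_mul_inv] at hpf ⊢
  rw [← hpf, mul_sum, mul_sum]
  exact sum_congr rfl fun j _ => by ring

theorem convExp_ofFn_eq_sum_hypoexpCoeff : ∀ {n : ℕ} (lam : Fin n → ℝ), Injective lam →
    ∀ {t : ℝ}, 0 ≤ t →
      convExp (List.ofFn lam) t = ∑ l, hypoexpCoeff lam l * Real.exp (-lam l * t)
  | 0, _, _, _, _ => rfl
  | 1, lam, _, t, ht => by
    simp [convExp, expDens, hypoexpCoeff, ht]
  | m + 2, lam, hlam, t, ht => by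
    have htail : ∀ u ∈ Set.Icc 0 t, convExp (List.ofFn (Fin.tail lam)) u =
        ∑ j, hypoexpCoeff (Fin.tail lam) j * Real.exp (-Fin.tail lam j * u) := fun u hu =>
      convExp_ofFn_eq_sum_hypoexpCoeff _ (hlam.comp (Fin.succ_injective _)) hu.1
    rw [List.ofFn_succ, convExp_cons_of_ne_nil (by simp)]
    refine (convPair_expDens_eq_sum univ ht (fun j _ h => Fin.succ_ne_zero j (hlam h))
      htail).trans ?_
    rw [Fin.sum_univ_succ _ (n := m + 1), hypoexpCoeff_zero lam hlam, sum_mul, ← sum_add_distrib]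
    refine sum_congr rfl fun j _ => ?_
    rw [hypoexpCoeff_succ]
    ring

theorem stmt_2_general (n : ℕ) (lam : Fin n → ℝ)
    (hdist : ∀ k l, k ≠ l → lam k ≠ lam l)
    (t : ℝ) (ht : 0 ≤ t) :
    convExp (List.ofFn lam) t =
      ∑ l : Fin n, ((∏ k : Fin n, lam k) /
        (∏ k ∈ Finset.univ.erase l, (lam k - lam l))) * Real.exp (-(lam l) * t) :=
  convExp_ofFn_eq_sum_hypoexpCoeff lam (fun k l => not_imp_not.1 (hdist k l)) ht

theorem stmt_2 (n : ℕ) (hn : 1 ≤ n) (lam : Fin n → ℝ)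
    (hpos : ∀ k, 0 < lam k)
    (hdist : ∀ k l, k ≠ l → lam k ≠ lam l)
    (t : ℝ) (ht : 0 ≤ t) :
    convExp (List.ofFn lam) t =
      ∑ l : Fin n, ((∏ k : Fin n, lam k) /
        (∏ k ∈ Finset.univ.erase l, (lam k - lam l))) * Real.exp (-(lam l) * t) :=
  stmt_2_general n lam hdist t ht
end

section
/- Let G : [0,∞) → [0,1] be differentiable with derivative g = G' ≥ 0, and let c₀,…,c_{N−2} be positive reals. Then d/dt [ Σ_{r=0}^{N−2} c_r binom(N−2,r) G(t)^r (1−G(t))^{N−2−r} ] = Σ_{r=0}^{N−3} g(t) G(t)^r (1−G(t))^{N−3−r} binom(N−2,r+1)(r+1)(c_{r+1} − c_r). Consequently, if the sequence (c_r) is non-decreasing, then Q(t) := 2G(t)^{N−2} + this derivative is nonnegative for all t ≥ 0. -/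
/-!
Differentiate `∑ a r * C(M,r) * x^r * (1-x)^(M-r)` term by term. The `(1-x)`-derivative of term `r`
pairs with the `x`-derivative of term `r + 1`, and since `(M - r) * C(M,r) = (r+1) * C(M,r+1)` the
pair collapses to `g * x^r * (1-x)^(M-1-r) * C(M,r+1) * (r+1) * (a (r+1) - a r)`. For non-decreasing
`a`, `g ≥ 0` and `0 ≤ x ≤ 1` each of these terms is nonnegative.
-/

open Finset

lemma Nat.cast_sub_mul_choose (M r : ℕ) :
    ((M - r : ℕ) : ℝ) * M.choose r = ((r : ℝ) + 1) * M.choose (r + 1) := by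
  have h := Nat.choose_succ_right_eq M r
  rw [mul_comm, mul_comm ((r : ℝ) + 1)]
  exact_mod_cast h.symm

lemma sum_bernstein_deriv_terms (a : ℕ → ℝ) (M : ℕ) (x g : ℝ) :
    ∑ r ∈ range (M + 1),
        (a r * M.choose r * ((r : ℝ) * x ^ (r - 1) * g) * (1 - x) ^ (M - r)
          + a r * M.choose r * x ^ r * (((M - r : ℕ) : ℝ) * (1 - x) ^ (M - r - 1) * (0 - g))) =
      ∑ r ∈ range M,
        g * x ^ r * (1 - x) ^ (M - 1 - r) * M.choose (r + 1) * ((r : ℝ) + 1) * (a (r + 1) - a r) := by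
  rw [sum_add_distrib, sum_range_succ', sum_range_succ]
  simp only [Nat.cast_zero, zero_mul, mul_zero, add_zero, Nat.sub_self, ← sum_add_distrib]
  refine sum_congr rfl fun r hr => ?_
  have hrM : r < M := mem_range.mp hr
  rw [show M - (r + 1) = M - 1 - r by omega, show M - r - 1 = M - 1 - r by omega,
    Nat.add_sub_cancel]
  push_cast
  linear_combination -(a r * x ^ r * (1 - x) ^ (M - 1 - r) * g) * Nat.cast_sub_mul_choose M r

theorem HasDerivAt.sum_bernstein {f : ℝ → ℝ} {f' t : ℝ} (hf : HasDerivAt f f' t)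
    (a : ℕ → ℝ) (M : ℕ) :
    HasDerivAt (fun t => ∑ r ∈ range (M + 1), a r * M.choose r * f t ^ r * (1 - f t) ^ (M - r))
      (∑ r ∈ range M,
        f' * f t ^ r * (1 - f t) ^ (M - 1 - r) * M.choose (r + 1) * ((r : ℝ) + 1) *
          (a (r + 1) - a r)) t := by
  rw [← sum_bernstein_deriv_terms]
  refine HasDerivAt.fun_sum fun r _ => ?_
  exact ((hf.pow r).const_mul _).mul (((hasDerivAt_const t 1).sub hf).pow (M - r))

lemma sum_bernstein_deriv_nonneg {a : ℕ → ℝ} {M : ℕ} (ha : ∀ r, r + 1 ≤ M → a r ≤ a (r + 1))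
    {x g : ℝ} (hx : x ∈ Set.Icc (0 : ℝ) 1) (hg : 0 ≤ g) :
    0 ≤ ∑ r ∈ range M,
      g * x ^ r * (1 - x) ^ (M - 1 - r) * M.choose (r + 1) * ((r : ℝ) + 1) * (a (r + 1) - a r) := by
  refine sum_nonneg fun r hr => ?_
  have hinc : 0 ≤ a (r + 1) - a r := sub_nonneg.mpr (ha r (mem_range.mp hr))
  have h1x : 0 ≤ 1 - x := sub_nonneg.mpr hx.2
  have hx0 : 0 ≤ x := hx.1
  positivity

theorem stmt_9_general (N : ℕ) (hN : 2 ≤ N) (G : ℝ → ℝ)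
    (hGd : Differentiable ℝ G)
    (hGmap : ∀ t, G t ∈ Set.Icc (0 : ℝ) 1)
    (hg : ∀ t, 0 ≤ deriv G t)
    (c : ℕ → ℝ) :
    (∀ t : ℝ, 0 ≤ t →
      HasDerivAt (fun t => ∑ r ∈ Finset.range (N - 1),
          c r * ((N - 2).choose r : ℝ) * G t ^ r * (1 - G t) ^ (N - 2 - r))
        (∑ r ∈ Finset.range (N - 2),
          deriv G t * G t ^ r * (1 - G t) ^ (N - 3 - r) *
            ((N - 2).choose (r + 1) : ℝ) * ((r : ℝ) + 1) * (c (r + 1) - c r)) t) ∧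
    ((∀ r, r + 1 ≤ N - 2 → c r ≤ c (r + 1)) → ∀ t : ℝ, 0 ≤ t →
      0 ≤ 2 * G t ^ (N - 2) +
        ∑ r ∈ Finset.range (N - 2),
          deriv G t * G t ^ r * (1 - G t) ^ (N - 3 - r) *
            ((N - 2).choose (r + 1) : ℝ) * ((r : ℝ) + 1) * (c (r + 1) - c r)) := by
  rw [show N - 1 = N - 2 + 1 by omega, show N - 3 = N - 2 - 1 by omega]
  refine ⟨fun t _ => (hGd t).hasDerivAt.sum_bernstein c (N - 2), fun hc t _ => ?_⟩
  have hG0 : 0 ≤ G t := (hGmap t).1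
  exact add_nonneg (by positivity) (sum_bernstein_deriv_nonneg hc (hGmap t) (hg t))

theorem stmt_9 (N : ℕ) (hN : 2 ≤ N) (G : ℝ → ℝ)
    (hGd : Differentiable ℝ G)
    (hGmap : ∀ t, G t ∈ Set.Icc (0 : ℝ) 1)
    (hg : ∀ t, 0 ≤ deriv G t)
    (c : ℕ → ℝ) (hc : ∀ r, r ≤ N - 2 → 0 < c r) :
    (∀ t : ℝ, 0 ≤ t →
      HasDerivAt (fun t => ∑ r ∈ Finset.range (N - 1),
          c r * ((N - 2).choose r : ℝ) * G t ^ r * (1 - G t) ^ (N - 2 - r))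
        (∑ r ∈ Finset.range (N - 2),
          deriv G t * G t ^ r * (1 - G t) ^ (N - 3 - r) *
            ((N - 2).choose (r + 1) : ℝ) * ((r : ℝ) + 1) * (c (r + 1) - c r)) t) ∧
    ((∀ r, r + 1 ≤ N - 2 → c r ≤ c (r + 1)) → ∀ t : ℝ, 0 ≤ t →
      0 ≤ 2 * G t ^ (N - 2) +
        ∑ r ∈ Finset.range (N - 2),
          deriv G t * G t ^ r * (1 - G t) ^ (N - 3 - r) *
            ((N - 2).choose (r + 1) : ℝ) * ((r : ℝ) + 1) * (c (r + 1) - c r)) :=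
  stmt_9_general N hN G hGd hGmap hg c
end

section
/- Let V : [0,1] → ℝ be C¹, strictly increasing, with bounded derivative, and for each N set λ_k = (N−k+1)/((N−k)(V((k+1)/N) − V(k/N))) for k = 1,…,N−1, assumed pairwise distinct. Let p_N(t) = P(T₁ + ⋯ + T_{N−1} ≤ t), where T_k are independent exponentials with rates λ_k. Then p_N(t) → H(t − (V(1) − V(0))) as N → ∞ for every t ≠ V(1) − V(0), where H is the Heaviside function. -/
/-!
Write `ΔV_k = V((k+1)/N) - V(k/N)`, so that `1/λ_k = ΔV_k (N-k)/(N-k+1)` and `ΔV_k ≤ C/N`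
with `C` a bound for `V'`. The total duration has mean
`Σ 1/λ_k = V(1) - V(1/N) - Σ ΔV_k/(N-k+1)`, where by Cauchy–Schwarz the correction is at most
`(Σ ΔV_k²)^(1/2) (Σ_{j ≥ 2} 1/j²)^(1/2)`, and variance
`Σ 1/λ_k² ≤ Σ ΔV_k² ≤ C (V(1) - V(0)) / N`. So the mean tends to `V(1) - V(0)` and the variance
to `0`, and Chebyshev's inequality concentrates the duration at `V(1) - V(0)`.
-/

open MeasureTheory ProbabilityTheory Filter Real Set Topology
open scoped Nat

namespace ProbabilityTheory

variable {r : ℝ}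

lemma integral_expMeasure (hr : 0 < r) (g : ℝ → ℝ) :
    ∫ x, g x ∂expMeasure r = ∫ x in Ioi 0, r * exp (-(r * x)) * g x := by
  have hpdf : ∀ x,
      (exponentialPDF r x).toReal = (Ici 0).indicator (fun x ↦ r * exp (-(r * x))) x := by
    intro x
    rw [exponentialPDF_eq, ENNReal.toReal_ofReal (by split_ifs <;> positivity)]
    rfl
  change ∫ x, g x ∂volume.withDensity (exponentialPDF r) = _
  rw [integral_withDensity_eq_integral_toReal_smul (f := exponentialPDF r)
    (measurable_exponentialPDFReal r).ennreal_ofReal (ae_of_all _ fun _ ↦ ENNReal.ofReal_lt_top)]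
  simp_rw [hpdf, smul_eq_mul, ← indicator_mul_left]
  rw [integral_indicator measurableSet_Ici, integral_Ici_eq_integral_Ioi]

lemma integral_pow_expMeasure (hr : 0 < r) (n : ℕ) :
    ∫ x, x ^ n ∂expMeasure r = n ! / r ^ n := by
  have hpow : ∀ x ∈ Ioi (0 : ℝ), r * exp (-(r * x)) * x ^ n
      = r * (x ^ (((n : ℝ) + 1) - 1) * exp (-(r * x))) := by
    intro x _
    rw [add_sub_cancel_right, rpow_natCast]
    ring
  rw [integral_expMeasure hr, setIntegral_congr_fun measurableSet_Ioi hpow, integral_const_mul,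
    integral_rpow_mul_exp_neg_mul_Ioi (by positivity) hr, Gamma_nat_eq_factorial,
    ← Nat.cast_succ, rpow_natCast, one_div, inv_pow, pow_succ]
  field_simp

lemma memLp_id_expMeasure (hr : 0 < r) : MemLp id 2 (expMeasure r) := by
  rw [memLp_two_iff_integrable_sq aestronglyMeasurable_id]
  -- a non-integrable function has Bochner integral `0`, and the second moment is `2 / r ^ 2`
  refine Integrable.of_integral_ne_zero ?_
  simp only [id, integral_pow_expMeasure hr]
  positivity

lemma integral_id_expMeasure (hr : 0 < r) : ∫ x, x ∂expMeasure r = r⁻¹ := by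
  simpa using integral_pow_expMeasure hr 1

lemma variance_id_expMeasure (hr : 0 < r) : Var[id; expMeasure r] = (r ^ 2)⁻¹ := by
  have := isProbabilityMeasure_expMeasure hr
  rw [variance_eq_sub (memLp_id_expMeasure hr)]
  simp only [Pi.pow_apply, id, integral_pow_expMeasure hr, integral_id_expMeasure hr]
  field_simp
  norm_num

lemma expMeasure_Iic (hr : 0 < r) (x : ℝ) :
    expMeasure r (Iic x) = ENNReal.ofReal (if 0 ≤ x then 1 - exp (-(r * x)) else 0) := by
  change volume.withDensity (exponentialPDF r) (Iic x) = _
  rw [withDensity_apply _ measurableSet_Iic, lintegral_exponentialPDF_eq_antiDeriv hr x]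

variable {Ω : Type*} [MeasurableSpace Ω] {P : Measure Ω} {X : Ω → ℝ}

lemma hasLaw_expMeasure_of_tail [IsProbabilityMeasure P] (hX : Measurable X) (hr : 0 < r)
    (htail : ∀ x, 0 ≤ x → P {ω | x < X ω} = ENNReal.ofReal (exp (-r * x))) :
    HasLaw X (expMeasure r) P := by
  have := isProbabilityMeasure_expMeasure hr
  have hcdf : ∀ x, 0 ≤ x → P (X ⁻¹' Iic x) = ENNReal.ofReal (1 - exp (-(r * x))) := by
    intro x hx
    have hcompl : X ⁻¹' Iic x = {ω | x < X ω}ᶜ := by ext; simp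
    rw [hcompl, prob_compl_eq_one_sub (measurableSet_lt measurable_const hX), htail x hx,
      ENNReal.ofReal_sub _ (exp_nonneg _), ENNReal.ofReal_one, neg_mul]
  refine ⟨hX.aemeasurable, Measure.ext_of_Iic _ _ fun x ↦ ?_⟩
  rw [Measure.map_apply hX measurableSet_Iic, expMeasure_Iic hr]
  split_ifs with hx
  · exact hcdf x hx
  · rw [ENNReal.ofReal_zero]
    refine le_antisymm ?_ zero_le
    calc P (X ⁻¹' Iic x) ≤ P (X ⁻¹' Iic 0) := measure_mono fun ω hω ↦ by
          simp only [mem_preimage, mem_Iic] at hω ⊢; linarith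
      _ = 0 := by simp [hcdf 0 le_rfl]

lemma HasLaw.memLp_two_of_expMeasure (hX : HasLaw X (expMeasure r) P) (hr : 0 < r) :
    MemLp X 2 P := by
  have := memLp_id_expMeasure hr
  rw [← hX.map_eq, memLp_map_measure_iff aestronglyMeasurable_id hX.aemeasurable] at this
  exact this

lemma HasLaw.integral_of_expMeasure (hX : HasLaw X (expMeasure r) P) (hr : 0 < r) :
    P[X] = r⁻¹ :=
  hX.integral_eq.trans (integral_id_expMeasure hr)

lemma HasLaw.variance_of_expMeasure (hX : HasLaw X (expMeasure r) P) (hr : 0 < r) :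
    Var[X; P] = (r ^ 2)⁻¹ :=
  hX.variance_eq.trans (variance_id_expMeasure hr)

variable {ι : Type*} {s : Finset ι} {X : ι → Ω → ℝ} {r : ι → ℝ}

lemma memLp_sum_of_hasLaw_expMeasure (hX : ∀ i ∈ s, HasLaw (X i) (expMeasure (r i)) P)
    (hr : ∀ i ∈ s, 0 < r i) : MemLp (fun ω ↦ ∑ i ∈ s, X i ω) 2 P :=
  memLp_finsetSum s fun i hi ↦ (hX i hi).memLp_two_of_expMeasure (hr i hi)

lemma integral_sum_of_hasLaw_expMeasure [IsFiniteMeasure P]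
    (hX : ∀ i ∈ s, HasLaw (X i) (expMeasure (r i)) P) (hr : ∀ i ∈ s, 0 < r i) :
    ∫ ω, ∑ i ∈ s, X i ω ∂P = ∑ i ∈ s, (r i)⁻¹ := by
  rw [integral_finsetSum s fun i hi ↦
    ((hX i hi).memLp_two_of_expMeasure (hr i hi)).integrable one_le_two]
  exact Finset.sum_congr rfl fun i hi ↦ (hX i hi).integral_of_expMeasure (hr i hi)

lemma variance_sum_of_hasLaw_expMeasure (hX : ∀ i ∈ s, HasLaw (X i) (expMeasure (r i)) P)
    (hr : ∀ i ∈ s, 0 < r i) (hind : iIndepFun X P) :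
    Var[fun ω ↦ ∑ i ∈ s, X i ω; P] = ∑ i ∈ s, (r i ^ 2)⁻¹ := by
  have hsum : (fun ω ↦ ∑ i ∈ s, X i ω) = ∑ i ∈ s, X i := by ext; simp
  rw [hsum, IndepFun.variance_sum (fun i hi ↦ (hX i hi).memLp_two_of_expMeasure (hr i hi))
    fun i _ j _ hij ↦ hind.indepFun hij]
  exact Finset.sum_congr rfl fun i hi ↦ (hX i hi).variance_of_expMeasure (hr i hi)

end ProbabilityTheory

section Concentration

variable {Ω : ℕ → Type*} [∀ N, MeasureSpace (Ω N)]
  [∀ N, IsProbabilityMeasure (ℙ : Measure (Ω N))] {S : ∀ N, Ω N → ℝ}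

lemma tendsto_measureReal_abs_sub_integral_ge (hS : ∀ᶠ N in atTop, MemLp (S N) 2 ℙ)
    (hvar : Tendsto (fun N ↦ Var[S N; ℙ]) atTop (𝓝 0)) {ε : ℝ} (hε : 0 < ε) :
    Tendsto (fun N ↦ (ℙ {ω | ε ≤ |S N ω - ∫ ω', S N ω'|}).toReal) atTop (𝓝 0) := by
  have hbound : Tendsto (fun N ↦ Var[S N; ℙ] / ε ^ 2) atTop (𝓝 0) := by
    simpa using hvar.div_const (ε ^ 2)
  refine tendsto_of_tendsto_of_tendsto_of_le_of_le' tendsto_const_nhds hbound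
    (Eventually.of_forall fun _ ↦ measureReal_nonneg) ?_
  filter_upwards [hS] with N hSN
  exact ENNReal.toReal_le_of_le_ofReal
    (div_nonneg (variance_nonneg _ _) (sq_nonneg ε)) (meas_ge_le_variance_div_sq hSN hε)

variable {m : ℝ} (hS : ∀ᶠ N in atTop, MemLp (S N) 2 ℙ)
  (hmean : Tendsto (fun N ↦ ∫ ω, S N ω) atTop (𝓝 m))
  (hvar : Tendsto (fun N ↦ Var[S N; ℙ]) atTop (𝓝 0))
include hS hmean hvar

lemma tendsto_measureReal_le_of_lt {t : ℝ} (ht : t < m) :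
    Tendsto (fun N ↦ (ℙ {ω | S N ω ≤ t}).toReal) atTop (𝓝 0) := by
  have hε : 0 < (m - t) / 2 := by linarith
  refine tendsto_of_tendsto_of_tendsto_of_le_of_le' tendsto_const_nhds
    (tendsto_measureReal_abs_sub_integral_ge hS hvar hε)
    (Eventually.of_forall fun _ ↦ measureReal_nonneg) ?_
  filter_upwards [hmean.eventually (lt_mem_nhds (show t + (m - t) / 2 < m by linarith))]
    with N hN
  refine measureReal_mono fun ω (hω : S N ω ≤ t) ↦ ?_
  show (m - t) / 2 ≤ |S N ω - ∫ ω', S N ω'|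
  exact le_abs.2 (Or.inr (by linarith))

lemma tendsto_measureReal_le_of_gt {t : ℝ} (ht : m < t) :
    Tendsto (fun N ↦ (ℙ {ω | S N ω ≤ t}).toReal) atTop (𝓝 1) := by
  have hε : 0 < (t - m) / 2 := by linarith
  have hlower := (tendsto_measureReal_abs_sub_integral_ge hS hvar hε).const_sub 1
  rw [sub_zero] at hlower
  refine tendsto_of_tendsto_of_tendsto_of_le_of_le' hlower tendsto_const_nhds ?_
    (Eventually.of_forall fun _ ↦ measureReal_le_one)
  filter_upwards [hmean.eventually (gt_mem_nhds (show m < t - (t - m) / 2 by linarith))]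
    with N hN
  have hcover :
      univ ⊆ {ω | S N ω ≤ t} ∪ {ω | (t - m) / 2 ≤ |S N ω - ∫ ω', S N ω'|} := by
    intro ω _
    rcases le_or_gt (S N ω) t with hω | hω
    · exact Or.inl hω
    · exact Or.inr <|
        show (t - m) / 2 ≤ |S N ω - ∫ ω', S N ω'| from le_abs.2 (Or.inl (by linarith))
  have := (measureReal_mono (μ := ℙ) hcover).trans (measureReal_union_le _ _)
  rw [probReal_univ, measureReal_def, measureReal_def] at this
  linarith

end Concentration

-- `gridIncrement V N k` and `attritionRate V N k` are the `ΔV_k` and `λ_k` of the statement.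
noncomputable def gridIncrement (V : ℝ → ℝ) (N k : ℕ) : ℝ :=
  V ((k + 1 : ℕ) / N) - V ((k : ℕ) / N)

noncomputable def attritionRate (V : ℝ → ℝ) (N k : ℕ) : ℝ :=
  ((N : ℝ) - k + 1) / (((N : ℝ) - k) * gridIncrement V N k)

section Grid

variable {V : ℝ → ℝ} {N k : ℕ}

lemma natCast_div_mem_Icc (hk : k ≤ N) : (k : ℝ) / N ∈ Icc (0 : ℝ) 1 :=
  ⟨by positivity, div_le_one_of_le₀ (by exact_mod_cast hk) N.cast_nonneg⟩

lemma natCast_sub_natCast_add_one_pos (hk : k ≤ N) : (0 : ℝ) < N - k + 1 := by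
  rw [sub_add_eq_add_sub, sub_pos]
  exact_mod_cast Nat.lt_succ_of_le hk

lemma gridIncrement_pos (hmono : StrictMonoOn V (Icc 0 1)) (hk : k + 1 ≤ N) :
    0 < gridIncrement V N k := by
  have hN : (0 : ℝ) < N := by exact_mod_cast (show 0 < N by omega)
  refine sub_pos.2 (hmono (natCast_div_mem_Icc (by omega)) (natCast_div_mem_Icc hk) ?_)
  gcongr
  exact_mod_cast k.lt_succ_self

lemma gridIncrement_le {C : ℝ} (hV : ContinuousOn V (Icc 0 1))
    (hV' : DifferentiableOn ℝ V (Ioo 0 1)) (hC : ∀ x ∈ Ioo (0 : ℝ) 1, deriv V x ≤ C)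
    (hk : k + 1 ≤ N) : gridIncrement V N k ≤ C / N := by
  have hN : (N : ℝ) ≠ 0 := by exact_mod_cast (show N ≠ 0 by omega)
  have key := (convex_Icc (0 : ℝ) 1).image_sub_le_mul_sub_of_deriv_le hV
    (by rwa [interior_Icc]) (by rwa [interior_Icc])
    ((k : ℕ) / N) (natCast_div_mem_Icc (by omega)) ((k + 1 : ℕ) / N) (natCast_div_mem_Icc hk)
    (by gcongr; exact_mod_cast k.le_succ)
  refine key.trans_eq ?_
  push_cast
  field_simp
  ring

lemma sum_gridIncrement (hN : 2 ≤ N) :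
    ∑ k ∈ Finset.Icc 1 (N - 1), gridIncrement V N k = V 1 - V (1 / N) := by
  have hN0 : (N : ℝ) ≠ 0 := by exact_mod_cast (show N ≠ 0 by omega)
  calc ∑ k ∈ Finset.Icc 1 (N - 1), gridIncrement V N k
      = V ((N - 1 + 1 : ℕ) / N) - V ((1 : ℕ) / N) :=
        Finset.sum_Icc_sub (by omega) fun i : ℕ ↦ V (i / N)
    _ = V 1 - V (1 / N) := by rw [Nat.sub_add_cancel (by omega), div_self hN0, Nat.cast_one]

lemma tendsto_sum_gridIncrement (hV : ContinuousWithinAt V (Icc 0 1) 0) :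
    Tendsto (fun N ↦ ∑ k ∈ Finset.Icc 1 (N - 1), gridIncrement V N k) atTop
      (𝓝 (V 1 - V 0)) := by
  have hgrid : Tendsto (fun N : ℕ ↦ (1 : ℝ) / N) atTop (𝓝[Icc 0 1] 0) :=
    tendsto_nhdsWithin_iff.2 ⟨tendsto_one_div_atTop_nhds_zero_nat,
      (eventually_ge_atTop 1).mono fun N hN ↦ by simpa using natCast_div_mem_Icc hN⟩
  refine ((hV.tendsto.comp hgrid).const_sub (V 1)).congr' ?_
  filter_upwards [eventually_ge_atTop 2] with N hN
  exact (sum_gridIncrement hN).symm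

lemma sum_inv_sq_sub_add_one_le_one (hN : 1 ≤ N) :
    ∑ k ∈ Finset.Icc 1 (N - 1), (((N : ℝ) - k + 1) ^ 2)⁻¹ ≤ 1 := by
  have hreflect : ∑ k ∈ Finset.Icc 1 (N - 1), (((N : ℝ) - k + 1) ^ 2)⁻¹
      = ∑ j ∈ Finset.Ioc 1 N, ((j : ℝ) ^ 2)⁻¹ := by
    refine Finset.sum_nbij' (fun k ↦ N + 1 - k) (fun j ↦ N + 1 - j) ?_ ?_ ?_ ?_ ?_ <;>
      intro k hk <;> simp only [Finset.mem_Icc, Finset.mem_Ioc] at hk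
    · simp only [Finset.mem_Ioc]; omega
    · simp only [Finset.mem_Icc]; omega
    · omega
    · omega
    · rw [Nat.cast_sub (by omega)]
      push_cast
      ring
  rw [hreflect]
  refine (sum_Ioc_inv_sq_le_sub one_ne_zero hN).trans ?_
  simp

lemma inv_attritionRate (hk : k < N) :
    (attritionRate V N k)⁻¹ = gridIncrement V N k * (1 - ((N : ℝ) - k + 1)⁻¹) := by
  have := natCast_sub_natCast_add_one_pos hk.le
  rw [attritionRate, inv_div]
  field_simp
  ring

lemma inv_attritionRate_le_gridIncrement (hmono : StrictMonoOn V (Icc 0 1)) (hk : k < N) :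
    (attritionRate V N k)⁻¹ ≤ gridIncrement V N k := by
  have := natCast_sub_natCast_add_one_pos hk.le
  rw [inv_attritionRate hk]
  exact mul_le_of_le_one_right (gridIncrement_pos hmono hk).le (by simp [this.le])

lemma attritionRate_pos (hmono : StrictMonoOn V (Icc 0 1)) (hk : k < N) :
    0 < attritionRate V N k := by
  have hNk : (0 : ℝ) < N - k := sub_pos.2 (by exact_mod_cast hk)
  have := gridIncrement_pos hmono hk
  unfold attritionRate
  positivity

end Grid

section Limits

variable {V : ℝ → ℝ} {C : ℝ} (hV : ContinuousOn V (Icc 0 1))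
  (hV' : DifferentiableOn ℝ V (Ioo 0 1)) (hmono : StrictMonoOn V (Icc 0 1))
  (hC : ∀ x ∈ Ioo (0 : ℝ) 1, deriv V x ≤ C)
include hV hV' hmono hC

lemma sum_sq_gridIncrement_le {N : ℕ} (hN : 2 ≤ N) :
    ∑ k ∈ Finset.Icc 1 (N - 1), gridIncrement V N k ^ 2 ≤ C / N * (V 1 - V 0) := by
  have hD : ∀ k ∈ Finset.Icc 1 (N - 1),
      0 < gridIncrement V N k ∧ gridIncrement V N k ≤ C / N := fun k hk ↦ by
      have hk : k + 1 ≤ N := by simp only [Finset.mem_Icc] at hk; omega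
      exact ⟨gridIncrement_pos hmono hk, gridIncrement_le hV hV' hC hk⟩
  have hCN : 0 ≤ C / N := by
    obtain ⟨hpos, hle⟩ := hD 1 (by simp only [Finset.mem_Icc]; omega)
    exact hpos.le.trans hle
  have hV0 : V 0 ≤ V (1 / N) := hmono.monotoneOn (left_mem_Icc.2 zero_le_one)
    (by simpa using natCast_div_mem_Icc (show 1 ≤ N by omega)) (by positivity)
  calc ∑ k ∈ Finset.Icc 1 (N - 1), gridIncrement V N k ^ 2
      ≤ ∑ k ∈ Finset.Icc 1 (N - 1), C / N * gridIncrement V N k :=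
        Finset.sum_le_sum fun k hk ↦ by
          rw [sq]; exact mul_le_mul_of_nonneg_right (hD k hk).2 (hD k hk).1.le
    _ = C / N * (V 1 - V (1 / N)) := by rw [← Finset.mul_sum, sum_gridIncrement hN]
    _ ≤ C / N * (V 1 - V 0) := by gcongr

lemma tendsto_sum_inv_sq_attritionRate :
    Tendsto (fun N ↦ ∑ k ∈ Finset.Icc 1 (N - 1), (attritionRate V N k ^ 2)⁻¹) atTop
      (𝓝 0) := by
  have hbound : Tendsto (fun N : ℕ ↦ C / N * (V 1 - V 0)) atTop (𝓝 0) := by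
    simpa using (tendsto_const_div_atTop_nhds_zero_nat C).mul_const (V 1 - V 0)
  refine squeeze_zero' (Eventually.of_forall fun N ↦ Finset.sum_nonneg fun k _ ↦ by positivity)
    ?_ hbound
  filter_upwards [eventually_ge_atTop 2] with N hN
  refine (Finset.sum_le_sum fun k hk ↦ ?_).trans (sum_sq_gridIncrement_le hV hV' hmono hC hN)
  have hk : k < N := by simp only [Finset.mem_Icc] at hk; omega
  rw [← inv_pow]
  exact pow_le_pow_left₀ (inv_nonneg.2 (attritionRate_pos hmono hk).le)
    (inv_attritionRate_le_gridIncrement hmono hk) 2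

lemma tendsto_sum_inv_attritionRate :
    Tendsto (fun N ↦ ∑ k ∈ Finset.Icc 1 (N - 1), (attritionRate V N k)⁻¹) atTop
      (𝓝 (V 1 - V 0)) := by
  set u : ℕ → ℕ → ℝ := fun N k ↦ ((N : ℝ) - k + 1)⁻¹
  have hbound : Tendsto (fun N : ℕ ↦ √(C / N * (V 1 - V 0))) atTop (𝓝 0) := by
    simpa using ((tendsto_const_div_atTop_nhds_zero_nat C).mul_const (V 1 - V 0)).sqrt
  have hcorrection : Tendsto (fun N ↦ ∑ k ∈ Finset.Icc 1 (N - 1), gridIncrement V N k * u N k)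
      atTop (𝓝 0) := by
    refine squeeze_zero' (Eventually.of_forall fun N ↦ Finset.sum_nonneg fun k hk ↦ ?_) ?_
      hbound
    · have hk : k + 1 ≤ N := by simp only [Finset.mem_Icc] at hk; omega
      have := gridIncrement_pos hmono hk
      have := natCast_sub_natCast_add_one_pos (show k ≤ N by omega)
      positivity
    filter_upwards [eventually_ge_atTop 2] with N hN
    refine (le_abs_self _).trans (abs_le_sqrt ?_)
    calc (∑ k ∈ Finset.Icc 1 (N - 1), gridIncrement V N k * u N k) ^ 2
        ≤ (∑ k ∈ Finset.Icc 1 (N - 1), gridIncrement V N k ^ 2) *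
            ∑ k ∈ Finset.Icc 1 (N - 1), u N k ^ 2 := Finset.sum_mul_sq_le_sq_mul_sq _ _ _
      _ ≤ (∑ k ∈ Finset.Icc 1 (N - 1), gridIncrement V N k ^ 2) * 1 := by
        simp only [u, inv_pow]
        gcongr
        exact sum_inv_sq_sub_add_one_le_one (by omega)
      _ ≤ C / N * (V 1 - V 0) := by
        rw [mul_one]; exact sum_sq_gridIncrement_le hV hV' hmono hC hN
  rw [← sub_zero (V 1 - V 0)]
  refine ((tendsto_sum_gridIncrement (hV.continuousWithinAt (left_mem_Icc.2 zero_le_one))).sub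
    hcorrection).congr' ?_
  filter_upwards with N
  rw [← Finset.sum_sub_distrib]
  refine Finset.sum_congr rfl fun k hk ↦ ?_
  have hk : k < N := by simp only [Finset.mem_Icc] at hk; omega
  rw [inv_attritionRate hk, mul_sub, mul_one]

end Limits

theorem stmt_19_general (V : ℝ → ℝ)
    (hV : ContDiffOn ℝ 1 V (Set.Icc 0 1))
    (hmono : StrictMonoOn V (Set.Icc 0 1))
    (hbdd : ∃ C : ℝ, ∀ x ∈ Set.Icc (0 : ℝ) 1, |deriv V x| ≤ C)
    (lam : ℕ → ℕ → ℝ)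
    (hlam : ∀ N, 2 ≤ N → ∀ k, 1 ≤ k → k ≤ N - 1 →
      lam N k = ((N : ℝ) - k + 1) /
        (((N : ℝ) - k) * (V ((k + 1 : ℕ) / N) - V ((k : ℕ) / N))))
    (Ω : ℕ → Type) (inst : ∀ N, MeasureSpace (Ω N))
    (instP : ∀ N, IsProbabilityMeasure (ℙ : Measure (Ω N)))
    (T : ∀ N, ℕ → Ω N → ℝ)
    (hmeas : ∀ N k, Measurable (T N k))
    (hind : ∀ N, iIndepFun (T N) ℙ)
    (hTdist : ∀ N, 2 ≤ N → ∀ k, 1 ≤ k → k ≤ N - 1 → ∀ x : ℝ, 0 ≤ x →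
      ℙ {ω | x < T N k ω} = ENNReal.ofReal (Real.exp (-(lam N k) * x))) :
    ∀ t : ℝ, t ≠ V 1 - V 0 →
      Tendsto (fun N : ℕ =>
          (ℙ {ω | ∑ k ∈ Finset.Icc 1 (N - 1), T N k ω ≤ t}).toReal)
        atTop (nhds (if t < V 1 - V 0 then 0 else 1)) := by
  obtain ⟨C, hC⟩ := hbdd
  have hVcont : ContinuousOn V (Icc 0 1) := hV.continuousOn
  have hVdiff : DifferentiableOn ℝ V (Ioo 0 1) :=
    (hV.differentiableOn one_ne_zero).mono Ioo_subset_Icc_self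
  have hderiv : ∀ x ∈ Ioo (0 : ℝ) 1, deriv V x ≤ C :=
    fun x hx ↦ (le_abs_self _).trans (hC x (Ioo_subset_Icc_self hx))
  have hrate : ∀ N, 2 ≤ N → ∀ k ∈ Finset.Icc 1 (N - 1), 0 < attritionRate V N k :=
    fun N hN k hk ↦ attritionRate_pos hmono (by simp only [Finset.mem_Icc] at hk; omega)
  have hlaw : ∀ N, 2 ≤ N → ∀ k ∈ Finset.Icc 1 (N - 1),
      HasLaw (T N k) (expMeasure (attritionRate V N k)) ℙ := by
    intro N hN k hk
    obtain ⟨hk1, hkN⟩ := Finset.mem_Icc.1 hk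
    have hlamk : lam N k = attritionRate V N k := hlam N hN k hk1 hkN
    exact hasLaw_expMeasure_of_tail (hmeas N k) (hrate N hN k hk)
      (hlamk ▸ hTdist N hN k hk1 hkN)
  have hS : ∀ᶠ N in atTop, MemLp (fun ω ↦ ∑ k ∈ Finset.Icc 1 (N - 1), T N k ω) 2 ℙ :=
    (eventually_ge_atTop 2).mono fun N hN ↦
      memLp_sum_of_hasLaw_expMeasure (hlaw N hN) (hrate N hN)
  have hmean : Tendsto (fun N ↦ ∫ ω, ∑ k ∈ Finset.Icc 1 (N - 1), T N k ω) atTop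
      (𝓝 (V 1 - V 0)) := by
    refine (tendsto_sum_inv_attritionRate hVcont hVdiff hmono hderiv).congr' ?_
    filter_upwards [eventually_ge_atTop 2] with N hN
    exact (integral_sum_of_hasLaw_expMeasure (hlaw N hN) (hrate N hN)).symm
  have hvar : Tendsto (fun N ↦ Var[fun ω ↦ ∑ k ∈ Finset.Icc 1 (N - 1), T N k ω; ℙ]) atTop
      (𝓝 0) := by
    refine (tendsto_sum_inv_sq_attritionRate hVcont hVdiff hmono hderiv).congr' ?_
    filter_upwards [eventually_ge_atTop 2] with N hN
    exact (variance_sum_of_hasLaw_expMeasure (hlaw N hN) (hrate N hN) (hind N)).symm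
  intro t ht
  split_ifs with hlt
  · exact tendsto_measureReal_le_of_lt hS hmean hvar hlt
  · exact tendsto_measureReal_le_of_gt hS hmean hvar ((not_lt.1 hlt).lt_of_ne ht.symm)

theorem stmt_19 (V : ℝ → ℝ)
    (hV : ContDiffOn ℝ 1 V (Set.Icc 0 1))
    (hmono : StrictMonoOn V (Set.Icc 0 1))
    (hbdd : ∃ C : ℝ, ∀ x ∈ Set.Icc (0 : ℝ) 1, |deriv V x| ≤ C)
    (lam : ℕ → ℕ → ℝ)
    (hlam : ∀ N, 2 ≤ N → ∀ k, 1 ≤ k → k ≤ N - 1 →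
      lam N k = ((N : ℝ) - k + 1) /
        (((N : ℝ) - k) * (V ((k + 1 : ℕ) / N) - V ((k : ℕ) / N))))
    (hdist : ∀ N, 2 ≤ N → ∀ k l, 1 ≤ k → k ≤ N - 1 → 1 ≤ l → l ≤ N - 1 →
      k ≠ l → lam N k ≠ lam N l)
    (Ω : ℕ → Type) (inst : ∀ N, MeasureSpace (Ω N))
    (instP : ∀ N, IsProbabilityMeasure (ℙ : Measure (Ω N)))
    (T : ∀ N, ℕ → Ω N → ℝ)
    (hmeas : ∀ N k, Measurable (T N k))
    (hind : ∀ N, iIndepFun (T N) ℙ)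
    (hTdist : ∀ N, 2 ≤ N → ∀ k, 1 ≤ k → k ≤ N - 1 → ∀ x : ℝ, 0 ≤ x →
      ℙ {ω | x < T N k ω} = ENNReal.ofReal (Real.exp (-(lam N k) * x))) :
    ∀ t : ℝ, t ≠ V 1 - V 0 →
      Tendsto (fun N : ℕ =>
          (ℙ {ω | ∑ k ∈ Finset.Icc 1 (N - 1), T N k ω ≤ t}).toReal)
        atTop (nhds (if t < V 1 - V 0 then 0 else 1)) :=
  stmt_19_general V hV hmono hbdd lam hlam Ω inst instP T hmeas hind hTdist
end
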